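/- For every integer k ≥ 2, rc*(C_{2k}({1,k})) = src*(C_{2k}({1,k})) = k, and rc*(C_{2k}({1,k+1})) = src*(C_{2k}({1,k+1})) = k. -/

import Mathlib

open scoped Classical

namespace RainbowDigraph

variable {V : Type}

/-- `p` is a directed path (walk) from `x` to `y` in the digraph `D`. -/
def IsPathFrom (D : V → V → Prop) (x y : V) (p : List V) : Prop :=
  List.Chain' D p ∧ p.head? = some x ∧ p.getLast? = some y

/-- The arcs of `p` receive pairwise distinct colors under the arc-coloring `c`. -/
def RainbowPath {k : ℕ} (c : V → V → Fin k) (p : List V) : Prop :=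
  ((p.zip p.tail).map (fun e => c e.1 e.2)).Nodup

/-- Directed distance: the minimum number of arcs of a directed `x y`-path. -/
noncomputable def dist (D : V → V → Prop) (x y : V) : ℕ :=
  sInf {m | ∃ p, IsPathFrom D x y p ∧ p.length = m + 1}

/-- Directed diameter: the maximum distance over ordered pairs of vertices. -/
noncomputable def diam (D : V → V → Prop) : ℕ :=
  sSup {d | ∃ x y, d = dist D x y}

/-- Strong connectivity of a digraph. -/
def Connected (D : V → V → Prop) : Prop :=
  ∀ x y : V, ∃ p, IsPathFrom D x y p

/-- `c` is a rainbow connected arc-coloring of `D`. -/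
def IsRainbowConnected (D : V → V → Prop) {k : ℕ} (c : V → V → Fin k) : Prop :=
  ∀ x y : V, x ≠ y → ∃ p, IsPathFrom D x y p ∧ RainbowPath c p

/-- `c` is a strong rainbow connected arc-coloring of `D`: every ordered pair of
distinct vertices is joined by a rainbow geodesic. -/
def IsStrongRainbowConnected (D : V → V → Prop) {k : ℕ} (c : V → V → Fin k) : Prop :=
  ∀ x y : V, x ≠ y →
    ∃ p, IsPathFrom D x y p ∧ RainbowPath c p ∧ p.length = dist D x y + 1

/-- The rainbow connection number `rc*(D)`. -/
noncomputable def rcStar (D : V → V → Prop) : ℕ :=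
  sInf {k | ∃ c : V → V → Fin k, IsRainbowConnected D c}

/-- The strong rainbow connection number `src*(D)`. -/
noncomputable def srcStar (D : V → V → Prop) : ℕ :=
  sInf {k | ∃ c : V → V → Fin k, IsStrongRainbowConnected D c}

/-- The biorientation of a graph `G`: each edge `uv` is replaced by arcs `uv` and `vu`. -/
def bior (G : SimpleGraph V) : V → V → Prop := fun x y => G.Adj x y

/-- The (undirected) rainbow connection number `rc(G)`: minimum over symmetric
(edge-)colorings that are rainbow connected. -/
noncomputable def rc (G : SimpleGraph V) : ℕ :=
  sInf {k | ∃ c : V → V → Fin k, (∀ x y, c x y = c y x) ∧ IsRainbowConnected G.Adj c}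

/-- The (undirected) strong rainbow connection number `src(G)`. -/
noncomputable def src (G : SimpleGraph V) : ℕ :=
  sInf {k | ∃ c : V → V → Fin k, (∀ x y, c x y = c y x) ∧ IsStrongRainbowConnected G.Adj c}

/-- The circulant digraph `C_n(S)` on `ZMod n`: arc `i → j` iff `j - i ≡ s (mod n)`
for some `s ∈ S`. -/
def circulant (n : ℕ) (S : Set ℕ) : ZMod n → ZMod n → Prop :=
  fun i j => ∃ s ∈ S, j = i + (s : ZMod n)

/-- The biorientation of the cycle `C_n`, on vertices `ZMod n`. -/
def cycleBior (n : ℕ) : ZMod n → ZMod n → Prop :=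
  fun i j => j = i + 1 ∨ i = j + 1

/-- The biorientation of the path `P_n`, on vertices `Fin n`. -/
def pathBior (n : ℕ) : Fin n → Fin n → Prop :=
  fun i j => (j : ℕ) = (i : ℕ) + 1 ∨ (i : ℕ) = (j : ℕ) + 1

/-- The biorientation of the star `K_{1,n}`, with center `0`. -/
def starBior (n : ℕ) : Fin (n + 1) → Fin (n + 1) → Prop :=
  fun x y => x ≠ y ∧ (x = 0 ∨ y = 0)

/-! ### Auxiliary machinery -/

section Aux

variable {n : ℕ}

/-- A run of `m` consecutive `+1` steps starting at `x`. -/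
def run (x : ZMod n) : ℕ → List (ZMod n)
  | 0 => [x]
  | (m+1) => x :: run (x+1) m

lemma run_cons (x : ZMod n) (m : ℕ) : ∃ t, run x m = x :: t := by
  cases m with
  | zero => exact ⟨[], rfl⟩
  | succ m => exact ⟨run (x+1) m, rfl⟩

lemma run_length (x : ZMod n) (m : ℕ) : (run x m).length = m + 1 := by
  induction m generalizing x with
  | zero => rfl
  | succ m ih => simp [run, ih]

lemma run_head (x : ZMod n) (m : ℕ) : (run x m).head? = some x := by
  obtain ⟨t, ht⟩ := run_cons x m; rw [ht]; rfl

lemma run_last (x : ZMod n) (m : ℕ) : (run x m).getLast? = some (x + (m : ZMod n)) := by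
  induction m generalizing x with
  | zero => simp [run]
  | succ m ih =>
      obtain ⟨t, ht⟩ := run_cons (x+1) m
      rw [show run x (m+1) = x :: run (x+1) m from rfl, ht, List.getLast?_cons_cons, ← ht, ih]
      congr 1
      push_cast
      ring

lemma run_chain' (S : Set ℕ) (h1 : (1:ℕ) ∈ S) (x : ZMod n) (m : ℕ) :
    List.Chain' (circulant n S) (run x m) := by
  induction m generalizing x with
  | zero => exact List.isChain_singleton x
  | succ m ih =>
      obtain ⟨t, ht⟩ := run_cons (x+1) m
      rw [show run x (m+1) = x :: run (x+1) m from rfl, ht]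
      refine List.isChain_cons_cons.mpr ⟨⟨1, h1, by norm_num⟩, ?_⟩
      rw [← ht]; exact ih (x+1)

lemma isPathFrom_run (S : Set ℕ) (h1 : (1:ℕ) ∈ S) (x : ZMod n) (m : ℕ) :
    IsPathFrom (circulant n S) x (x + (m : ZMod n)) (run x m) :=
  ⟨run_chain' S h1 x m, run_head x m, run_last x m⟩

lemma isPathFrom_cons (S : Set ℕ) (h1 : (1:ℕ) ∈ S) {s : ℕ} (hs : s ∈ S) (x : ZMod n) (m : ℕ) :
    IsPathFrom (circulant n S) x (x + (s : ZMod n) + (m : ZMod n))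
      (x :: run (x + (s : ZMod n)) m) := by
  obtain ⟨t, ht⟩ := run_cons (x + (s : ZMod n)) m
  refine ⟨?_, rfl, ?_⟩
  · rw [ht]
    exact List.isChain_cons_cons.mpr ⟨⟨s, hs, rfl⟩, by rw [← ht]; exact run_chain' S h1 _ m⟩
  · rw [ht, List.getLast?_cons_cons, ← ht, run_last]

lemma run_colors {k : ℕ} (c : ZMod n → ZMod n → Fin k) (x : ZMod n) (m : ℕ) :
    (((run x m).zip (run x m).tail).map (fun e => c e.1 e.2)) =
      (List.range m).map (fun i : ℕ => c (x + (i : ZMod n)) (x + (i : ZMod n) + 1)) := by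
  induction m generalizing x with
  | zero => rfl
  | succ m ih =>
      obtain ⟨t, ht⟩ := run_cons (x+1) m
      have ih' := ih (x+1)
      rw [ht, List.tail_cons] at ih'
      rw [show run x (m+1) = x :: run (x+1) m from rfl, ht, List.tail_cons,
        List.zip_cons_cons, List.map_cons, ih', List.range_succ_eq_map, List.map_cons,
        List.map_map]
      congr 1
      · norm_num
      · refine List.map_congr_left (fun i _ => ?_)
        simp only [Function.comp_apply, Nat.succ_eq_add_one]
        congr 1 <;> push_cast <;> ring

lemma cons_colors {k : ℕ} (c : ZMod n → ZMod n → Fin k) (x y : ZMod n) (m : ℕ) :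
    (((x :: run y m).zip (x :: run y m).tail).map (fun e => c e.1 e.2)) =
      c x y :: (List.range m).map (fun i : ℕ => c (y + (i : ZMod n)) (y + (i : ZMod n) + 1)) := by
  obtain ⟨t, ht⟩ := run_cons y m
  have hrc := run_colors c y m
  rw [ht, List.tail_cons] at hrc
  rw [List.tail_cons, ht, List.zip_cons_cons, List.map_cons, hrc]

lemma path_steps (S : Set ℕ) (s1 s2 : ℕ) (hS : S = {s1, s2}) :
    ∀ (p : List (ZMod n)) (x y : ZMod n), List.Chain' (circulant n S) p →
      p.head? = some x → p.getLast? = some y →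
      ∃ a b : ℕ, a + b + 1 = p.length ∧ y = x + ((a * s1 + b * s2 : ℕ) : ZMod n) := by
  intro p
  induction p with
  | nil => intro x y _ hx _; simp at hx
  | cons v q ih =>
      intro x y hchain hx hy
      have hxv : x = v := by simp at hx; exact hx.symm
      cases q with
      | nil =>
          have hyv : y = v := by simp at hy; exact hy.symm
          exact ⟨0, 0, by simp, by simp [hxv, hyv]⟩
      | cons w r =>
          rw [List.Chain', List.isChain_cons_cons] at hchain
          have hy' : (w :: r).getLast? = some y := by
            rw [List.getLast?_cons_cons] at hy; exact hy
          obtain ⟨a, b, hab, hsum⟩ := ih w y hchain.2 rfl hy'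
          obtain ⟨s, hsmem, hws⟩ := hchain.1
          rw [hS] at hsmem
          simp only [Set.mem_insert_iff, Set.mem_singleton_iff] at hsmem
          rcases hsmem with h | h
          · refine ⟨a+1, b, ?_, ?_⟩
            · simp only [List.length_cons] at hab ⊢; omega
            · subst hxv h; rw [hsum, hws]; push_cast; ring
          · refine ⟨a, b+1, ?_, ?_⟩
            · simp only [List.length_cons] at hab ⊢; omega
            · subst hxv h; rw [hsum, hws]; push_cast; ring

lemma rainbowPath_length {V : Type} {m : ℕ} (c : V → V → Fin m) {p : List V}
    (h : RainbowPath c p) : p.length ≤ m + 1 := by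
  have h1 := List.Nodup.length_le_card h
  rw [List.length_map, List.length_zip, List.length_tail, Fintype.card_fin] at h1
  omega

lemma dist_eq' {V : Type} {D : V → V → Prop} {x y : V} {m : ℕ}
    (hex : ∃ p, IsPathFrom D x y p ∧ p.length = m + 1)
    (hlb : ∀ p, IsPathFrom D x y p → m + 1 ≤ p.length) :
    dist D x y = m := by
  have hm : m ∈ {m' | ∃ p, IsPathFrom D x y p ∧ p.length = m' + 1} := hex
  refine le_antisymm (Nat.sInf_le hm) (le_csInf ⟨m, hm⟩ ?_)
  rintro m' ⟨p, hp, hl⟩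
  have := hlb p hp
  omega

lemma mod_cancel {k t u w : ℕ} (hu : u < k) (hw : w < k)
    (h : (t + u) % k = (t + w) % k) : u = w := by
  have h' : u % k = w % k := Nat.ModEq.add_left_cancel' t h
  rwa [Nat.mod_eq_of_lt hu, Nat.mod_eq_of_lt hw] at h'

lemma core1 {k L j : ℕ} (hj : j < 2*k) (h : (L + k) % (2*k) = j) :
    L % (2*k) = (j + k) % (2*k) := by
  have h1 : L + k ≡ j [MOD 2*k] := by
    show (L + k) % (2*k) = j % (2*k)
    rw [h, Nat.mod_eq_of_lt hj]
  have h2 : L + k + k ≡ j + k [MOD 2*k] := Nat.ModEq.add_right k h1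
  have h3 : L + 2*k ≡ j + k [MOD 2*k] := by
    rw [show L + k + k = L + 2*k by ring] at h2; exact h2
  exact (Nat.add_modEq_right.symm.trans h3)

/-- Distance function for `C_{2k}({1,k})`. -/
def f1 (k j : ℕ) : ℕ := if j < k then j else if j = k then 1 else j - k + 1

/-- Distance function for `C_{2k}({1,k+1})`. -/
def f2 (k j : ℕ) : ℕ := if j ≤ k then j else j - k

lemma arcs_lb1 {k a b j : ℕ} (hk : 2 ≤ k) (hj : j < 2*k) (hj0 : j ≠ 0)
    (h : (a * 1 + b * k) % (2*k) = j) : f1 k j ≤ a + b := by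
  obtain ⟨q, r, hr, hbqr⟩ : ∃ q r, r < 2 ∧ b = 2*q + r := ⟨b/2, b%2, by omega, by omega⟩
  have hrw : a * 1 + b * k = (a + r * k) + q * (2*k) := by subst hbqr; ring
  rw [hrw, Nat.add_mul_mod_self_right] at h
  have hre : r = 0 ∨ r = 1 := by omega
  rcases hre with hr | hr
  · rw [hr, zero_mul, add_zero] at h
    have : j ≤ a := h ▸ Nat.mod_le a (2*k)
    unfold f1; split_ifs <;> omega
  · rw [hr, one_mul] at h
    have hb1 : 1 ≤ b := by omega
    have hL := core1 hj h
    by_cases hjk : k ≤ j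
    · have : (j + k) % (2*k) = j - k := by
        rw [Nat.mod_eq_sub_mod (by omega : j + k ≥ 2*k)]
        rw [show j + k - 2*k = j - k by omega]
        exact Nat.mod_eq_of_lt (by omega)
      rw [this] at hL
      have : j - k ≤ a := hL ▸ Nat.mod_le a (2*k)
      unfold f1; split_ifs <;> omega
    · have : (j + k) % (2*k) = j + k := Nat.mod_eq_of_lt (by omega)
      rw [this] at hL
      have : j + k ≤ a := hL ▸ Nat.mod_le a (2*k)
      unfold f1; split_ifs <;> omega

lemma arcs_lb2 {k a b j : ℕ} (hk : 2 ≤ k) (hj : j < 2*k) (hj0 : j ≠ 0)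
    (h : (a * 1 + b * (k+1)) % (2*k) = j) : f2 k j ≤ a + b := by
  obtain ⟨q, r, hr, hbqr⟩ : ∃ q r, r < 2 ∧ b = 2*q + r := ⟨b/2, b%2, by omega, by omega⟩
  have hrw : a * 1 + b * (k+1) = ((a + b) + r * k) + q * (2*k) := by subst hbqr; ring
  rw [hrw, Nat.add_mul_mod_self_right] at h
  have hre : r = 0 ∨ r = 1 := by omega
  rcases hre with hr | hr
  · rw [hr, zero_mul, add_zero] at h
    have : j ≤ a + b := h ▸ Nat.mod_le (a+b) (2*k)
    unfold f2; split_ifs <;> omega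
  · rw [hr, one_mul] at h
    have hb1 : 1 ≤ b := by omega
    have hL := core1 hj h
    by_cases hjk : k ≤ j
    · by_cases hjeq : j = k
      · rw [show j + k = 2*k by omega, Nat.mod_self] at hL
        have hdvd : 2*k ∣ (a + b) := Nat.dvd_of_mod_eq_zero hL
        have : 2*k ≤ a + b := Nat.le_of_dvd (by omega) hdvd
        unfold f2; split_ifs <;> omega
      · have : (j + k) % (2*k) = j - k := by
          rw [Nat.mod_eq_sub_mod (by omega : j + k ≥ 2*k)]
          rw [show j + k - 2*k = j - k by omega]
          exact Nat.mod_eq_of_lt (by omega)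
        rw [this] at hL
        have : j - k ≤ a + b := hL ▸ Nat.mod_le (a+b) (2*k)
        unfold f2; split_ifs <;> omega
    · have : (j + k) % (2*k) = j + k := Nat.mod_eq_of_lt (by omega)
      rw [this] at hL
      have : j + k ≤ a + b := hL ▸ Nat.mod_le (a+b) (2*k)
      unfold f2; split_ifs <;> omega

lemma strong_imp_rainbow {V : Type} {D : V → V → Prop} {m : ℕ} {c : V → V → Fin m}
    (h : IsStrongRainbowConnected D c) : IsRainbowConnected D c := by
  intro x y hxy
  obtain ⟨p, h1, h2, _⟩ := h x y hxy
  exact ⟨p, h1, h2⟩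

lemma final_assembly {V : Type} (D : V → V → Prop) (k : ℕ)
    (c : V → V → Fin k) (hc : IsStrongRainbowConnected D c)
    (hlow : ∀ m (c' : V → V → Fin m), IsRainbowConnected D c' → k ≤ m) :
    rcStar D = k ∧ srcStar D = k := by
  constructor
  · refine le_antisymm (Nat.sInf_le ⟨c, strong_imp_rainbow hc⟩)
      (le_csInf ⟨k, c, strong_imp_rainbow hc⟩ ?_)
    rintro m ⟨c', hc'⟩; exact hlow m c' hc'
  · refine le_antisymm (Nat.sInf_le ⟨c, hc⟩) (le_csInf ⟨k, c, hc⟩ ?_)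
    rintro m ⟨c', hc'⟩; exact hlow m c' (strong_imp_rainbow hc')

end Aux

section Main

variable {k : ℕ}

lemma val_helper (hk : 2 ≤ k) (x : ZMod (2*k)) (i : ℕ) :
    (x + (i : ZMod (2*k))).val % k = (x.val + i) % k := by
  haveI : NeZero (2*k) := ⟨by omega⟩
  have hdvd : k ∣ 2*k := ⟨2, by ring⟩
  rw [ZMod.val_add, ZMod.val_natCast, Nat.mod_mod_of_dvd _ hdvd,
    Nat.add_mod, Nat.mod_mod_of_dvd i hdvd, ← Nat.add_mod]

lemma natCast_sub_val (hk : 2 ≤ k) (x y : ZMod (2*k)) :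
    (((y - x).val : ℕ) : ZMod (2*k)) = y - x := by
  haveI : NeZero (2*k) := ⟨by omega⟩
  rw [ZMod.natCast_val, ZMod.cast_id]

lemma hlb_gen (hk : 2 ≤ k) (S : Set ℕ) (s1 s2 : ℕ) (hS : S = {s1, s2})
    (f : ℕ → ℕ)
    (harith : ∀ a b j : ℕ, j < 2*k → j ≠ 0 → (a * s1 + b * s2) % (2*k) = j → f j ≤ a + b)
    (x y : ZMod (2*k)) (hxy : x ≠ y) :
    ∀ p, IsPathFrom (circulant (2*k) S) x y p → f ((y - x).val) + 1 ≤ p.length := by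
  haveI : NeZero (2*k) := ⟨by omega⟩
  intro p hp
  obtain ⟨hc, hh, hl⟩ := hp
  obtain ⟨a, b, hab, hsum⟩ := path_steps S s1 s2 hS p x y hc hh hl
  have hne : y - x ≠ 0 := sub_ne_zero.mpr (Ne.symm hxy)
  have hj0 : (y - x).val ≠ 0 := fun h0 => hne ((ZMod.val_eq_zero _).mp h0)
  have hjlt : (y - x).val < 2*k := ZMod.val_lt _
  have hcast : ((a * s1 + b * s2 : ℕ) : ZMod (2*k)) = y - x := by rw [hsum]; ring
  have hmod : (a * s1 + b * s2) % (2*k) = (y - x).val := by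
    have := congrArg ZMod.val hcast
    rwa [ZMod.val_natCast] at this
  have := harith a b _ hjlt hj0 hmod
  omega

lemma strong1 (hk : 2 ≤ k) :
    IsStrongRainbowConnected (circulant (2*k) ({1, k} : Set ℕ))
      (fun i j => if j = i + 1 then (⟨i.val % k, Nat.mod_lt _ (by omega)⟩ : Fin k)
        else ⟨(i.val + (k-1)) % k, Nat.mod_lt _ (by omega)⟩) := by
  haveI : NeZero (2*k) := ⟨by omega⟩
  set c : ZMod (2*k) → ZMod (2*k) → Fin k :=
    fun i j => if j = i + 1 then (⟨i.val % k, Nat.mod_lt _ (by omega)⟩ : Fin k)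
      else ⟨(i.val + (k-1)) % k, Nat.mod_lt _ (by omega)⟩ with hcdef
  intro x y hxy
  obtain ⟨j, hjdef⟩ : ∃ j, j = (y - x).val := ⟨_, rfl⟩
  have hjlt : j < 2*k := hjdef ▸ ZMod.val_lt _
  have hj0 : j ≠ 0 := by
    intro h0
    rw [hjdef] at h0
    have hyx := (ZMod.val_eq_zero _).mp h0
    rw [sub_eq_zero] at hyx
    exact hxy hyx.symm
  have hy : y = x + (j : ZMod (2*k)) := by
    rw [hjdef, natCast_sub_val hk]; ring
  have hone : (1:ℕ) ∈ ({1, k} : Set ℕ) := Set.mem_insert 1 {k}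
  have hkmem : k ∈ ({1, k} : Set ℕ) := Set.mem_insert_iff.mpr (Or.inr rfl)
  have hlb := hlb_gen hk ({1, k} : Set ℕ) 1 k rfl (f1 k)
    (fun a b j' hj' hj'0 hmod => arcs_lb1 hk hj' hj'0 hmod) x y hxy
  rw [← hjdef] at hlb
  have hkne1 : ((k:ℕ) : ZMod (2*k)) ≠ 1 := by
    intro h
    have := congrArg ZMod.val h
    rw [ZMod.val_natCast, Nat.mod_eq_of_lt (by omega), ZMod.val_one_eq_one_mod,
      Nat.mod_eq_of_lt (by omega)] at this
    omega
  by_cases hjk : j < k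
  · -- ones-only path
    refine ⟨run x j, hy ▸ isPathFrom_run _ hone x j, ?_, ?_⟩
    · rw [RainbowPath, run_colors]
      refine List.Nodup.map_on ?_ List.nodup_range
      intro i hi i' hi' hfeq
      rw [List.mem_range] at hi hi'
      simp only [hcdef, if_pos rfl, Fin.mk.injEq] at hfeq
      rw [val_helper hk, val_helper hk] at hfeq
      exact mod_cancel (by omega) (by omega) hfeq
    · have hf : f1 k j = j := by unfold f1; rw [if_pos hjk]
      have hlb' : ∀ p, IsPathFrom (circulant (2*k) ({1, k} : Set ℕ)) x y p →
          j + 1 ≤ p.length := by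
        intro p hp; have := hlb p hp; omega
      rw [run_length,
        dist_eq' ⟨run x j, hy ▸ isPathFrom_run _ hone x j, run_length x j⟩ hlb']
  · -- one k-step then ones
    push_neg at hjk
    set m := j - k with hmdef
    have hmlt : m < k := by omega
    have hend : x + ((k:ℕ) : ZMod (2*k)) + ((m:ℕ) : ZMod (2*k)) = y := by
      rw [hy, add_assoc, ← Nat.cast_add, show k + m = j by omega]
    have hpath : IsPathFrom (circulant (2*k) ({1, k} : Set ℕ)) x y
        (x :: run (x + ((k:ℕ) : ZMod (2*k))) m) :=
      hend ▸ isPathFrom_cons _ hone hkmem x m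
    have hlen : (x :: run (x + ((k:ℕ) : ZMod (2*k))) m).length = (m + 1) + 1 := by
      rw [List.length_cons, run_length]
    have hf1 : f1 k j = m + 1 := by
      unfold f1; split_ifs <;> omega
    refine ⟨_, hpath, ?_, ?_⟩
    · rw [RainbowPath, cons_colors]
      rw [List.nodup_cons]
      constructor
      · intro hmem
        rw [List.mem_map] at hmem
        obtain ⟨i, hi, heq⟩ := hmem
        rw [List.mem_range] at hi
        have hcond : x + ((k:ℕ) : ZMod (2*k)) ≠ x + 1 := by
          intro h; exact hkne1 (add_left_cancel h)
        simp only [hcdef, if_pos rfl, if_neg hcond, Fin.mk.injEq] at heq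
        rw [show x + ((k:ℕ) : ZMod (2*k)) + ((i:ℕ) : ZMod (2*k))
            = x + (((k + i : ℕ)) : ZMod (2*k)) by push_cast; ring] at heq
        rw [val_helper hk] at heq
        rw [show x.val + (k + i) = (x.val + i) + k by ring, Nat.add_mod_right] at heq
        have := mod_cancel (t := x.val) (by omega : i < k) (by omega : k - 1 < k) heq
        omega
      · refine List.Nodup.map_on ?_ List.nodup_range
        intro i hi i' hi' hfeq
        rw [List.mem_range] at hi hi'
        simp only [hcdef, if_pos rfl, Fin.mk.injEq] at hfeq
        rw [show x + ((k:ℕ) : ZMod (2*k)) + ((i:ℕ) : ZMod (2*k))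
            = x + (((k + i : ℕ)) : ZMod (2*k)) by push_cast; ring,
          show x + ((k:ℕ) : ZMod (2*k)) + ((i':ℕ) : ZMod (2*k))
            = x + (((k + i' : ℕ)) : ZMod (2*k)) by push_cast; ring] at hfeq
        rw [val_helper hk, val_helper hk] at hfeq
        rw [show x.val + (k + i) = (x.val + i) + k by ring, Nat.add_mod_right,
          show x.val + (k + i') = (x.val + i') + k by ring, Nat.add_mod_right] at hfeq
        exact mod_cancel (by omega) (by omega) hfeq
    · rw [hlen]
      have : dist (circulant (2*k) ({1, k} : Set ℕ)) x y = m + 1 := by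
        refine dist_eq' ⟨_, hpath, hlen⟩ ?_
        intro p hp
        have := hlb p hp
        omega
      rw [this]

lemma strong2 (hk : 2 ≤ k) :
    IsStrongRainbowConnected (circulant (2*k) ({1, k+1} : Set ℕ))
      (fun i _ => (⟨i.val % k, Nat.mod_lt _ (by omega)⟩ : Fin k)) := by
  haveI : NeZero (2*k) := ⟨by omega⟩
  set c : ZMod (2*k) → ZMod (2*k) → Fin k :=
    fun i _ => (⟨i.val % k, Nat.mod_lt _ (by omega)⟩ : Fin k) with hcdef
  intro x y hxy
  obtain ⟨j, hjdef⟩ : ∃ j, j = (y - x).val := ⟨_, rfl⟩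
  have hjlt : j < 2*k := hjdef ▸ ZMod.val_lt _
  have hj0 : j ≠ 0 := by
    intro h0
    rw [hjdef] at h0
    have hyx := (ZMod.val_eq_zero _).mp h0
    rw [sub_eq_zero] at hyx
    exact hxy hyx.symm
  have hy : y = x + (j : ZMod (2*k)) := by
    rw [hjdef, natCast_sub_val hk]; ring
  have hone : (1:ℕ) ∈ ({1, k+1} : Set ℕ) := Set.mem_insert 1 {k+1}
  have hkmem : k+1 ∈ ({1, k+1} : Set ℕ) := Set.mem_insert_iff.mpr (Or.inr rfl)
  have hlb := hlb_gen hk ({1, k+1} : Set ℕ) 1 (k+1) rfl (f2 k)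
    (fun a b j' hj' hj'0 hmod => arcs_lb2 hk hj' hj'0 hmod) x y hxy
  rw [← hjdef] at hlb
  by_cases hjk : j ≤ k
  · refine ⟨run x j, hy ▸ isPathFrom_run _ hone x j, ?_, ?_⟩
    · rw [RainbowPath, run_colors]
      refine List.Nodup.map_on ?_ List.nodup_range
      intro i hi i' hi' hfeq
      rw [List.mem_range] at hi hi'
      simp only [hcdef, Fin.mk.injEq] at hfeq
      rw [val_helper hk, val_helper hk] at hfeq
      exact mod_cancel (by omega) (by omega) hfeq
    · have hf : f2 k j = j := by unfold f2; rw [if_pos hjk]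
      have hlb' : ∀ p, IsPathFrom (circulant (2*k) ({1, k+1} : Set ℕ)) x y p →
          j + 1 ≤ p.length := by
        intro p hp; have := hlb p hp; omega
      rw [run_length,
        dist_eq' ⟨run x j, hy ▸ isPathFrom_run _ hone x j, run_length x j⟩ hlb']
  · push_neg at hjk
    set m := j - (k+1) with hmdef
    have hmlt : m < k - 1 := by omega
    have hend : x + ((k+1:ℕ) : ZMod (2*k)) + ((m:ℕ) : ZMod (2*k)) = y := by
      rw [hy, add_assoc, ← Nat.cast_add, show (k+1) + m = j by omega]
    have hpath : IsPathFrom (circulant (2*k) ({1, k+1} : Set ℕ)) x y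
        (x :: run (x + ((k+1:ℕ) : ZMod (2*k))) m) :=
      hend ▸ isPathFrom_cons _ hone hkmem x m
    have hlen : (x :: run (x + ((k+1:ℕ) : ZMod (2*k))) m).length = (m + 1) + 1 := by
      rw [List.length_cons, run_length]
    refine ⟨_, hpath, ?_, ?_⟩
    · rw [RainbowPath, cons_colors]
      rw [List.nodup_cons]
      constructor
      · intro hmem
        rw [List.mem_map] at hmem
        obtain ⟨i, hi, heq⟩ := hmem
        rw [List.mem_range] at hi
        simp only [hcdef, Fin.mk.injEq] at heq
        rw [show x + ((k+1:ℕ) : ZMod (2*k)) + ((i:ℕ) : ZMod (2*k))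
            = x + (((k+1+i : ℕ)) : ZMod (2*k)) by push_cast; ring] at heq
        rw [val_helper hk] at heq
        rw [show x.val + (k+1+i) = (x.val + (1+i)) + k by ring, Nat.add_mod_right] at heq
        have hx0 : x.val % k = (x.val + 0) % k := by rw [Nat.add_zero]
        rw [hx0] at heq
        have := mod_cancel (t := x.val) (by omega : 1 + i < k) (by omega : (0:ℕ) < k) heq
        omega
      · refine List.Nodup.map_on ?_ List.nodup_range
        intro i hi i' hi' hfeq
        rw [List.mem_range] at hi hi'
        simp only [hcdef, Fin.mk.injEq] at hfeq
        rw [show x + ((k+1:ℕ) : ZMod (2*k)) + ((i:ℕ) : ZMod (2*k))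
            = x + (((k+1+i : ℕ)) : ZMod (2*k)) by push_cast; ring,
          show x + ((k+1:ℕ) : ZMod (2*k)) + ((i':ℕ) : ZMod (2*k))
            = x + (((k+1+i' : ℕ)) : ZMod (2*k)) by push_cast; ring] at hfeq
        rw [val_helper hk, val_helper hk] at hfeq
        rw [show x.val + (k+1+i) = (x.val + (1+i)) + k by ring, Nat.add_mod_right,
          show x.val + (k+1+i') = (x.val + (1+i')) + k by ring, Nat.add_mod_right] at hfeq
        have := mod_cancel (by omega : 1 + i < k) (by omega : 1 + i' < k) hfeq
        omega
    · rw [hlen]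
      have hf2 : f2 k j = m + 1 := by
        unfold f2; split_ifs <;> omega
      have : dist (circulant (2*k) ({1, k+1} : Set ℕ)) x y = m + 1 := by
        refine dist_eq' ⟨_, hpath, hlen⟩ ?_
        intro p hp
        have := hlb p hp
        omega
      rw [this]

lemma low1 (hk : 2 ≤ k) (m : ℕ) (c : ZMod (2*k) → ZMod (2*k) → Fin m)
    (h : IsRainbowConnected (circulant (2*k) ({1, k} : Set ℕ)) c) : k ≤ m := by
  haveI : NeZero (2*k) := ⟨by omega⟩
  set y : ZMod (2*k) := ((2*k-1 : ℕ) : ZMod (2*k)) with hydef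
  have hyval : y.val = 2*k-1 := by
    rw [hydef, ZMod.val_natCast, Nat.mod_eq_of_lt (by omega)]
  have hy0 : (0 : ZMod (2*k)) ≠ y := by
    intro h0
    have := congrArg ZMod.val h0
    rw [ZMod.val_zero, hyval] at this
    omega
  obtain ⟨p, hp, hrb⟩ := h 0 y hy0
  obtain ⟨hc, hh, hl⟩ := hp
  obtain ⟨a, b, hab, hsum⟩ := path_steps ({1, k} : Set ℕ) 1 k rfl p 0 y hc hh hl
  have hcast : ((a * 1 + b * k : ℕ) : ZMod (2*k)) = y := by rw [hsum]; ring
  have hmod : (a * 1 + b * k) % (2*k) = 2*k-1 := by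
    have := congrArg ZMod.val hcast
    rwa [ZMod.val_natCast, hyval] at this
  have harcs := arcs_lb1 hk (show 2*k-1 < 2*k by omega) (by omega) hmod
  have hf : f1 k (2*k-1) = k := by unfold f1; split_ifs <;> omega
  have hlen := rainbowPath_length c hrb
  omega

lemma low2 (hk : 2 ≤ k) (m : ℕ) (c : ZMod (2*k) → ZMod (2*k) → Fin m)
    (h : IsRainbowConnected (circulant (2*k) ({1, k+1} : Set ℕ)) c) : k ≤ m := by
  haveI : NeZero (2*k) := ⟨by omega⟩
  set y : ZMod (2*k) := ((k : ℕ) : ZMod (2*k)) with hydef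
  have hyval : y.val = k := by
    rw [hydef, ZMod.val_natCast, Nat.mod_eq_of_lt (by omega)]
  have hy0 : (0 : ZMod (2*k)) ≠ y := by
    intro h0
    have := congrArg ZMod.val h0
    rw [ZMod.val_zero, hyval] at this
    omega
  obtain ⟨p, hp, hrb⟩ := h 0 y hy0
  obtain ⟨hc, hh, hl⟩ := hp
  obtain ⟨a, b, hab, hsum⟩ := path_steps ({1, k+1} : Set ℕ) 1 (k+1) rfl p 0 y hc hh hl
  have hcast : ((a * 1 + b * (k+1) : ℕ) : ZMod (2*k)) = y := by rw [hsum]; ring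
  have hmod : (a * 1 + b * (k+1)) % (2*k) = k := by
    have := congrArg ZMod.val hcast
    rwa [ZMod.val_natCast, hyval] at this
  have harcs := arcs_lb2 hk (show k < 2*k by omega) (by omega) hmod
  have hf : f2 k k = k := by unfold f2; split_ifs <;> omega
  have hlen := rainbowPath_length c hrb
  omega

end Main

/-- For every integer `k ≥ 2`: `rc*(C_{2k}({1,k})) = src*(C_{2k}({1,k})) = k`
and `rc*(C_{2k}({1,k+1})) = src*(C_{2k}({1,k+1})) = k`. -/
theorem stmt18 (k : ℕ) (hk : 2 ≤ k) :
    (rcStar (circulant (2 * k) ({1, k} : Set ℕ)) = k ∧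
     srcStar (circulant (2 * k) ({1, k} : Set ℕ)) = k) ∧
    (rcStar (circulant (2 * k) ({1, k + 1} : Set ℕ)) = k ∧
     srcStar (circulant (2 * k) ({1, k + 1} : Set ℕ)) = k) := by
  have h1 := final_assembly (circulant (2 * k) ({1, k} : Set ℕ)) k _
    (strong1 hk) (fun m c' hc' => low1 hk m c' hc')
  have h2 := final_assembly (circulant (2 * k) ({1, k + 1} : Set ℕ)) k _
    (strong2 hk) (fun m c' hc' => low2 hk m c' hc')
  exact ⟨h1, h2⟩

end RainbowDigraph
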